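/- Let f1, f2 : ℝ → ℝ be C¹ and let p1, p2 : ℝ → ℝ be polynomial functions of degree at most 3; set u(x,y) = f1(x)·p1(y) + f2(y)·p2(x). Let P be the bicubic Hermite corner interpolant on the unit square of u and let s be the Hermite transfinite boundary interpolant on the unit square of u − P. Then u(x,y) = s(x,y) + P(x,y) for all (x,y) ∈ [0,1]². -/

import Mathlib

/-- Cubic Hermite basis functions on `[0,1]`. -/
noncomputable def H0 (x : ℝ) : ℝ := (1 - x) ^ 2 * (1 + 2 * x)
noncomputable def H1 (x : ℝ) : ℝ := x ^ 2 * (3 - 2 * x)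
noncomputable def G0 (x : ℝ) : ℝ := x * (1 - x) ^ 2
noncomputable def G1 (x : ℝ) : ℝ := x ^ 2 * (x - 1)

/-- Partial derivative in the first variable. -/
noncomputable def pdx (v : ℝ → ℝ → ℝ) (x y : ℝ) : ℝ := deriv (fun t => v t y) x

/-- Partial derivative in the second variable. -/
noncomputable def pdy (v : ℝ → ℝ → ℝ) (x y : ℝ) : ℝ := deriv (fun t => v x t) y

/-- Mixed second partial derivative `∂²v/∂x∂y`. -/
noncomputable def pdxy (v : ℝ → ℝ → ℝ) (x y : ℝ) : ℝ := pdx (fun a b => pdy v a b) x y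

/-- The bicubic Hermite corner interpolant on the unit square. -/
noncomputable def bicubicCorner (u : ℝ → ℝ → ℝ) (x y : ℝ) : ℝ :=
    H0 x * H0 y * u 0 0 + H0 x * H1 y * u 0 1
  + H1 x * H0 y * u 1 0 + H1 x * H1 y * u 1 1
  + G0 x * H0 y * pdx u 0 0 + G0 x * H1 y * pdx u 0 1
  + G1 x * H0 y * pdx u 1 0 + G1 x * H1 y * pdx u 1 1
  + H0 x * G0 y * pdy u 0 0 + H0 x * G1 y * pdy u 0 1
  + H1 x * G0 y * pdy u 1 0 + H1 x * G1 y * pdy u 1 1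
  + G0 x * G0 y * pdxy u 0 0 + G0 x * G1 y * pdxy u 0 1
  + G1 x * G0 y * pdxy u 1 0 + G1 x * G1 y * pdxy u 1 1

/-- The Hermite transfinite boundary interpolant on the unit square. -/
noncomputable def hermiteTransfinite (v : ℝ → ℝ → ℝ) (x y : ℝ) : ℝ :=
    H0 x * v 0 y + H1 x * v 1 y + H0 y * v x 0 + H1 y * v x 1
  + G0 x * pdx v 0 y + G1 x * pdx v 1 y + G0 y * pdy v x 0 + G1 y * pdy v x 1

/-! Write `h` for the one-dimensional cubic Hermite interpolant. For a rank-two tensor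
`w = α₁ ⊗ β₁ + α₂ ⊗ β₂` the corner interpolant is `hα₁ ⊗ hβ₁ + hα₂ ⊗ hβ₂` and the transfinite
interpolant is `hα₁ ⊗ β₁ + α₁ ⊗ hβ₁ + hα₂ ⊗ β₂ + α₂ ⊗ hβ₂`. Since `h` reproduces cubics,
`P = hf₁ ⊗ p₁ + p₂ ⊗ hf₂`, so `u - P = e₁ ⊗ p₁ + p₂ ⊗ e₂` with `eᵢ = fᵢ - hfᵢ`. As `h`
reproduces values and slopes at `0` and `1`, `h eᵢ = 0`, and therefore `s = u - P`. -/

noncomputable def hermiteInterp (f : ℝ → ℝ) (t : ℝ) : ℝ :=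
  H0 t * f 0 + H1 t * f 1 + G0 t * deriv f 0 + G1 t * deriv f 1

lemma hasDerivAt_H0 (x : ℝ) : HasDerivAt H0 (6 * x ^ 2 - 6 * x) x :=
  ((((hasDerivAt_id' x).const_sub 1).fun_pow 2).mul
    (((hasDerivAt_id' x).const_mul 2).const_add 1)).congr_deriv (by push_cast; ring)

lemma hasDerivAt_H1 (x : ℝ) : HasDerivAt H1 (6 * x - 6 * x ^ 2) x :=
  (((hasDerivAt_id' x).fun_pow 2).mul
    (((hasDerivAt_id' x).const_mul 2).const_sub 3)).congr_deriv (by push_cast; ring)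

lemma hasDerivAt_G0 (x : ℝ) : HasDerivAt G0 (3 * x ^ 2 - 4 * x + 1) x :=
  ((hasDerivAt_id' x).mul (((hasDerivAt_id' x).const_sub 1).fun_pow 2)).congr_deriv
    (by push_cast; ring)

lemma hasDerivAt_G1 (x : ℝ) : HasDerivAt G1 (3 * x ^ 2 - 2 * x) x :=
  (((hasDerivAt_id' x).fun_pow 2).mul ((hasDerivAt_id' x).sub_const 1)).congr_deriv
    (by push_cast; ring)

lemma hasDerivAt_hermiteInterp (f : ℝ → ℝ) (t : ℝ) :
    HasDerivAt (hermiteInterp f) ((6 * t ^ 2 - 6 * t) * f 0 + (6 * t - 6 * t ^ 2) * f 1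
      + (3 * t ^ 2 - 4 * t + 1) * deriv f 0 + (3 * t ^ 2 - 2 * t) * deriv f 1) t :=
  ((((hasDerivAt_H0 t).mul_const _).add ((hasDerivAt_H1 t).mul_const _)).add
    ((hasDerivAt_G0 t).mul_const _)).add ((hasDerivAt_G1 t).mul_const _)

lemma differentiable_hermiteInterp (f : ℝ → ℝ) : Differentiable ℝ (hermiteInterp f) :=
  fun t => (hasDerivAt_hermiteInterp f t).differentiableAt

lemma hermiteInterp_sub_hermiteInterp {f : ℝ → ℝ} (hf : Differentiable ℝ f) :
    hermiteInterp (f - hermiteInterp f) = 0 := by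
  have hd : ∀ t, deriv (f - hermiteInterp f) t = deriv f t - deriv (hermiteInterp f) t :=
    fun t => deriv_sub (hf t) (differentiable_hermiteInterp f t)
  funext t
  simp only [hermiteInterp, hd, (hasDerivAt_hermiteInterp f _).deriv, Pi.sub_apply, Pi.zero_apply,
    H0, H1, G0, G1]
  ring

lemma Polynomial.hermiteInterp_eval (p : Polynomial ℝ) (hp : p.degree ≤ 3) :
    hermiteInterp p.eval = p.eval := by
  funext t
  have hp4 : p.natDegree < 4 :=
    (Polynomial.natDegree_le_iff_degree_le.mpr hp).trans_lt (by norm_num)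
  have hp'4 : p.derivative.natDegree < 4 := (p.natDegree_derivative_le).trans_lt (by omega)
  have hc4 : p.coeff 4 = 0 := Polynomial.coeff_eq_zero_of_natDegree_lt hp4
  simp only [hermiteInterp, Polynomial.deriv]
  simp only [Polynomial.eval_eq_sum_range' hp4, Polynomial.eval_eq_sum_range' hp'4]
  simp only [Finset.sum_range_succ, Finset.sum_range_zero, Polynomial.coeff_derivative, hc4,
    H0, H1, G0, G1]
  push_cast
  ring

section RankTwo

variable {α₁ β₁ α₂ β₂ : ℝ → ℝ}

lemma pdx_rankTwo (hα₁ : Differentiable ℝ α₁) (hα₂ : Differentiable ℝ α₂) (x y : ℝ) :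
    pdx (fun x y => α₁ x * β₁ y + α₂ x * β₂ y) x y
      = deriv α₁ x * β₁ y + deriv α₂ x * β₂ y :=
  (((hα₁ x).hasDerivAt.mul_const _).add ((hα₂ x).hasDerivAt.mul_const _)).deriv

lemma pdy_rankTwo (hβ₁ : Differentiable ℝ β₁) (hβ₂ : Differentiable ℝ β₂) (x y : ℝ) :
    pdy (fun x y => α₁ x * β₁ y + α₂ x * β₂ y) x y
      = α₁ x * deriv β₁ y + α₂ x * deriv β₂ y :=
  (((hβ₁ y).hasDerivAt.const_mul _).add ((hβ₂ y).hasDerivAt.const_mul _)).deriv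

lemma pdxy_rankTwo (hα₁ : Differentiable ℝ α₁) (hβ₁ : Differentiable ℝ β₁)
    (hα₂ : Differentiable ℝ α₂) (hβ₂ : Differentiable ℝ β₂) (x y : ℝ) :
    pdxy (fun x y => α₁ x * β₁ y + α₂ x * β₂ y) x y
      = deriv α₁ x * deriv β₁ y + deriv α₂ x * deriv β₂ y := by
  simp only [pdxy, pdy_rankTwo hβ₁ hβ₂]
  exact pdx_rankTwo hα₁ hα₂ x y

lemma bicubicCorner_rankTwo (hα₁ : Differentiable ℝ α₁) (hβ₁ : Differentiable ℝ β₁)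
    (hα₂ : Differentiable ℝ α₂) (hβ₂ : Differentiable ℝ β₂) (x y : ℝ) :
    bicubicCorner (fun x y => α₁ x * β₁ y + α₂ x * β₂ y) x y
      = hermiteInterp α₁ x * hermiteInterp β₁ y + hermiteInterp α₂ x * hermiteInterp β₂ y := by
  simp only [bicubicCorner, pdx_rankTwo hα₁ hα₂, pdy_rankTwo hβ₁ hβ₂,
    pdxy_rankTwo hα₁ hβ₁ hα₂ hβ₂, hermiteInterp]
  ring

lemma hermiteTransfinite_rankTwo (hα₁ : Differentiable ℝ α₁) (hβ₁ : Differentiable ℝ β₁)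
    (hα₂ : Differentiable ℝ α₂) (hβ₂ : Differentiable ℝ β₂) (x y : ℝ) :
    hermiteTransfinite (fun x y => α₁ x * β₁ y + α₂ x * β₂ y) x y
      = hermiteInterp α₁ x * β₁ y + α₁ x * hermiteInterp β₁ y
        + hermiteInterp α₂ x * β₂ y + α₂ x * hermiteInterp β₂ y := by
  simp only [hermiteTransfinite, pdx_rankTwo hα₁ hα₂, pdy_rankTwo hβ₁ hβ₂, hermiteInterp]
  ring

end RankTwo

/-- Core of the proof of Theorem 3.2: for `u(x,y) = f1(x)p1(y) + f2(y)p2(x)` with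
`deg p1, deg p2 ≤ 3`, the deterministic part `s + P` reproduces `u` on the unit square. -/
theorem hermite_deterministic_part_reproduces_u
    (f1 f2 : ℝ → ℝ) (hf1 : ContDiff ℝ 1 f1) (hf2 : ContDiff ℝ 1 f2)
    (p1 p2 : Polynomial ℝ) (hp1 : p1.degree ≤ 3) (hp2 : p2.degree ≤ 3)
    (u : ℝ → ℝ → ℝ)
    (hu : ∀ x y : ℝ, u x y = f1 x * p1.eval y + f2 y * p2.eval x)
    (P : ℝ → ℝ → ℝ) (hP : ∀ x y : ℝ, P x y = bicubicCorner u x y)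
    (s : ℝ → ℝ → ℝ)
    (hs : ∀ x y : ℝ, s x y = hermiteTransfinite (fun a b => u a b - P a b) x y) :
    ∀ x ∈ Set.Icc (0 : ℝ) 1, ∀ y ∈ Set.Icc (0 : ℝ) 1,
      u x y = s x y + P x y := by
  intro x _ y _
  have hf1' := hf1.differentiable one_ne_zero
  have hf2' := hf2.differentiable one_ne_zero
  have he1 := hf1'.sub (differentiable_hermiteInterp f1)
  have he2 := hf2'.sub (differentiable_hermiteInterp f2)
  have hu' : u = fun x y => f1 x * p1.eval y + p2.eval x * f2 y :=
    funext₂ fun a b => by rw [hu, mul_comm (f2 b)]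
  have hP' : P = fun x y => hermiteInterp f1 x * p1.eval y + p2.eval x * hermiteInterp f2 y :=
    funext₂ fun a b => by
      rw [hP, hu', bicubicCorner_rankTwo hf1' p1.differentiable p2.differentiable hf2',
        p1.hermiteInterp_eval hp1, p2.hermiteInterp_eval hp2]
  have hv : (fun a b => u a b - P a b) = fun x y =>
      (f1 - hermiteInterp f1) x * p1.eval y + p2.eval x * (f2 - hermiteInterp f2) y := by
    funext a b; rw [hu', hP']; simp only [Pi.sub_apply]; ring
  rw [hs, hv, hermiteTransfinite_rankTwo he1 p1.differentiable p2.differentiable he2,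
    hermiteInterp_sub_hermiteInterp hf1', hermiteInterp_sub_hermiteInterp hf2',
    p1.hermiteInterp_eval hp1, p2.hermiteInterp_eval hp2, hP', hu']
  simp only [Pi.sub_apply, Pi.zero_apply]
  ring
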